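/- arXiv:2310.10979 — 2 statements merged into one kernel-verified Lean document; each statement's English description precedes it below -/
import Mathlib

section
/- If λ: ℂ² → M_N(ℂ) is S¹-equivariant of weight one, then Iλ, Jλ, and Kλ are again S¹-equivariant of weight one, and the operators I, J, K satisfy the quaternion relations: I(Iλ) = −λ, J(Jλ) = −λ, K(Kλ) = −λ, I(Jλ) = Kλ, and J(Iλ) = −Kλ. -/
open Matrix

/-- The complex structure `J` on `ℂ²`: `J(z₁,z₂) = (−conj z₂, conj z₁)`. -/
noncomputable def Jq (p : ℂ × ℂ) : ℂ × ℂ :=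
  (-(starRingEnd ℂ) p.2, (starRingEnd ℂ) p.1)

/-- The complex structure `K` on `ℂ²`: `K(z₁,z₂) = (−i conj z₂, i conj z₁)`. -/
noncomputable def Kq (p : ℂ × ℂ) : ℂ × ℂ :=
  (-Complex.I * (starRingEnd ℂ) p.2, Complex.I * (starRingEnd ℂ) p.1)

/-- A map `λ : ℂ² → M_N(ℂ)` is `S¹`-equivariant of weight one if
`λ(w • z) = w • λ(z)` for every unit scalar `w`. -/
def EqvWtOne (N : ℕ) (lam : ℂ × ℂ → Matrix (Fin N) (Fin N) ℂ) : Prop :=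
  ∀ w : ℂ, ‖w‖ = 1 → ∀ z : ℂ × ℂ, lam (w • z) = w • lam z

/-- The operator `I` on equivariant maps: `(Iλ)(p) = i·λ(p)`. -/
noncomputable def Iop {N : ℕ} (lam : ℂ × ℂ → Matrix (Fin N) (Fin N) ℂ) :
    ℂ × ℂ → Matrix (Fin N) (Fin N) ℂ :=
  fun p => Complex.I • lam p

/-- The operator `J` on equivariant maps: `(Jλ)(p) = −(λ(J p))*`. -/
noncomputable def Jop {N : ℕ} (lam : ℂ × ℂ → Matrix (Fin N) (Fin N) ℂ) :
    ℂ × ℂ → Matrix (Fin N) (Fin N) ℂ :=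
  fun p => -(lam (Jq p))ᴴ

/-- The operator `K` on equivariant maps: `(Kλ)(p) = (λ(K p))*`. -/
noncomputable def Kop {N : ℕ} (lam : ℂ × ℂ → Matrix (Fin N) (Fin N) ℂ) :
    ℂ × ℂ → Matrix (Fin N) (Fin N) ℂ :=
  fun p => (lam (Kq p))ᴴ

/-! `J` and `K` are conjugate-linear on `ℂ²` with `J² = K² = -1` and `K = i J`. Precomposing
with a conjugate-linear map and taking the conjugate transpose both conjugate the weight, so
together they preserve weight one; the quaternion relations then follow from `λ(-z) = -λ(z)`
and `λ(i z) = i λ(z)`. -/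

lemma Jq_smul (w : ℂ) (z : ℂ × ℂ) : Jq (w • z) = starRingEnd ℂ w • Jq z := by
  simp only [Jq, Prod.smul_fst, Prod.smul_snd, Prod.smul_mk, smul_eq_mul, map_mul, mul_neg]

lemma Jq_Jq (z : ℂ × ℂ) : Jq (Jq z) = -z := by
  simp [Jq, Prod.ext_iff]

lemma Kq_eq_I_smul_Jq (z : ℂ × ℂ) : Kq z = Complex.I • Jq z := by
  simp only [Kq, Jq, Prod.smul_mk, smul_eq_mul, mul_neg, neg_mul]

lemma Kq_smul (w : ℂ) (z : ℂ × ℂ) : Kq (w • z) = starRingEnd ℂ w • Kq z := by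
  rw [Kq_eq_I_smul_Jq, Kq_eq_I_smul_Jq, Jq_smul, smul_comm]

lemma Kq_Kq (z : ℂ × ℂ) : Kq (Kq z) = -z := by
  rw [Kq_eq_I_smul_Jq, Kq_eq_I_smul_Jq, Jq_smul, smul_smul, Jq_Jq, Complex.conj_I,
    mul_neg, Complex.I_mul_I, neg_neg, one_smul]

namespace EqvWtOne

variable {N : ℕ} {lam : ℂ × ℂ → Matrix (Fin N) (Fin N) ℂ}

lemma const_smul (h : EqvWtOne N lam) (c : ℂ) : EqvWtOne N (fun p => c • lam p) :=
  fun w hw z => by simp only [h w hw z, smul_comm c w]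

lemma neg (h : EqvWtOne N lam) : EqvWtOne N (-lam) :=
  fun w hw z => by simp only [Pi.neg_apply, h w hw z, smul_neg]

lemma conjTranspose_comp (h : EqvWtOne N lam) {f : ℂ × ℂ → ℂ × ℂ}
    (hf : ∀ (w : ℂ) (z : ℂ × ℂ), f (w • z) = starRingEnd ℂ w • f z) :
    EqvWtOne N (fun p => (lam (f p))ᴴ) := fun w hw z => by
  have hw' : ‖starRingEnd ℂ w‖ = 1 := by rwa [Complex.norm_conj]
  simp only [hf, h _ hw', conjTranspose_smul, Complex.star_def, Complex.conj_conj]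

lemma map_neg (h : EqvWtOne N lam) (z : ℂ × ℂ) : lam (-z) = -lam z := by
  simpa using h (-1) (by simp) z

lemma map_I_smul (h : EqvWtOne N lam) (z : ℂ × ℂ) :
    lam (Complex.I • z) = Complex.I • lam z :=
  h Complex.I (by simp) z

lemma Iop (h : EqvWtOne N lam) : EqvWtOne N (Iop lam) :=
  h.const_smul Complex.I

lemma Jop (h : EqvWtOne N lam) : EqvWtOne N (Jop lam) :=
  (h.conjTranspose_comp Jq_smul).neg

lemma Kop (h : EqvWtOne N lam) : EqvWtOne N (Kop lam) :=
  h.conjTranspose_comp Kq_smul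

end EqvWtOne

section QuaternionRelations

variable {N : ℕ} {lam : ℂ × ℂ → Matrix (Fin N) (Fin N) ℂ}

lemma Iop_Iop : Iop (Iop lam) = -lam := by
  funext p
  simp only [Iop, smul_smul, Complex.I_mul_I, neg_one_smul, Pi.neg_apply]

lemma Jop_Jop (h : EqvWtOne N lam) : Jop (Jop lam) = -lam := by
  funext p
  simp only [Jop, conjTranspose_neg, conjTranspose_conjTranspose, neg_neg, Jq_Jq,
    h.map_neg, Pi.neg_apply]

lemma Kop_Kop (h : EqvWtOne N lam) : Kop (Kop lam) = -lam := by
  funext p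
  simp only [Kop, conjTranspose_conjTranspose, Kq_Kq, h.map_neg, Pi.neg_apply]

lemma Kop_apply_eq (h : EqvWtOne N lam) (p : ℂ × ℂ) :
    Kop lam p = -Complex.I • (lam (Jq p))ᴴ := by
  rw [Kop, Kq_eq_I_smul_Jq, h.map_I_smul, conjTranspose_smul, Complex.star_def,
    Complex.conj_I]

lemma Iop_Jop (h : EqvWtOne N lam) : Iop (Jop lam) = Kop lam := by
  funext p
  rw [Kop_apply_eq h, Iop, Jop, smul_neg, neg_smul]

lemma Jop_Iop (h : EqvWtOne N lam) : Jop (Iop lam) = -Kop lam := by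
  funext p
  rw [Pi.neg_apply, Kop_apply_eq h, Jop, Iop, conjTranspose_smul, Complex.star_def,
    Complex.conj_I]

end QuaternionRelations

/-- If `λ` is `S¹`-equivariant of weight one, so are `Iλ`, `Jλ`, `Kλ`, and the
operators `I`, `J`, `K` satisfy the quaternion relations. -/
theorem quaternionic_structure_on_equivariant_maps (N : ℕ)
    (lam : ℂ × ℂ → Matrix (Fin N) (Fin N) ℂ) (h : EqvWtOne N lam) :
    EqvWtOne N (Iop lam) ∧ EqvWtOne N (Jop lam) ∧ EqvWtOne N (Kop lam) ∧
    Iop (Iop lam) = -lam ∧ Jop (Jop lam) = -lam ∧ Kop (Kop lam) = -lam ∧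
    Iop (Jop lam) = Kop lam ∧ Jop (Iop lam) = -(Kop lam) :=
  ⟨h.Iop, h.Jop, h.Kop, Iop_Iop, Jop_Jop h, Kop_Kop h, Iop_Jop h, Jop_Iop h⟩
end

section
/- Let Γ be a finite subgroup of SU(2) and let R: Γ → U(ℂ[Γ]) be the left regular representation of Γ on the group algebra ℂ[Γ], unitary with respect to the standard inner product. Then the space M of pairs (α, β) of ℂ-linear endomorphisms of ℂ[Γ] satisfying the Γ-invariance relations is a complex vector space of dimension 2·|Γ| (equivalently, real dimension 4·|Γ|). -/
open Matrix
set_option maxHeartbeats 1000000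

/-- The left regular representation of a group `G` on the group algebra
`ℂ[G] ≅ (G → ℂ)`, acting by `(R(g) f)(x) = f(g⁻¹ x)`, i.e. `R(g) δ_{g'} = δ_{g g'}`
on basis vectors. -/
def reg (G : Type*) [Group G] (g : G) : (G → ℂ) →ₗ[ℂ] (G → ℂ) where
  toFun f := fun x => f (g⁻¹ * x)
  map_add' _ _ := rfl
  map_smul' _ _ := rfl

/-- The `2 × 2` complex matrix underlying an element of a subgroup `Γ` of the
unitary group `U(2)`. -/
noncomputable def matOf {Γ : Subgroup (Matrix.unitaryGroup (Fin 2) ℂ)} (γ : Γ) :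
    Matrix (Fin 2) (Fin 2) ℂ :=
  ((γ : Matrix.unitaryGroup (Fin 2) ℂ) : Matrix (Fin 2) (Fin 2) ℂ)

/-- The space `M` of pairs `(α, β)` of `ℂ`-linear endomorphisms of the group algebra
`ℂ[Γ]` satisfying the `Γ`-invariance relations
`R(γ)⁻¹ ∘ α ∘ R(γ) = u α + v β` and `R(γ)⁻¹ ∘ β ∘ R(γ) = −conj(v) α + conj(u) β`
for every `γ = [[u, v], [−conj v, conj u]] ∈ Γ`, as a complex subspace of
`End(ℂ[Γ]) × End(ℂ[Γ])`. -/
noncomputable def Mspace (Γ : Subgroup (Matrix.unitaryGroup (Fin 2) ℂ)) :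
    Submodule ℂ (((↥Γ → ℂ) →ₗ[ℂ] (↥Γ → ℂ)) ×
      ((↥Γ → ℂ) →ₗ[ℂ] (↥Γ → ℂ))) where
  carrier := {p | ∀ γ : Γ,
    reg Γ γ⁻¹ ∘ₗ p.1 ∘ₗ reg Γ γ = matOf γ 0 0 • p.1 + matOf γ 0 1 • p.2 ∧
    reg Γ γ⁻¹ ∘ₗ p.2 ∘ₗ reg Γ γ =
      (-(starRingEnd ℂ) (matOf γ 0 1)) • p.1 + (starRingEnd ℂ) (matOf γ 0 0) • p.2}
  add_mem' := by
    intro a b ha hb γ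
    obtain ⟨ha1, ha2⟩ := ha γ
    obtain ⟨hb1, hb2⟩ := hb γ
    constructor
    · show reg Γ γ⁻¹ ∘ₗ (a.1 + b.1) ∘ₗ reg Γ γ = _
      rw [LinearMap.add_comp, LinearMap.comp_add, ha1, hb1]
      show _ = matOf γ 0 0 • (a.1 + b.1) + matOf γ 0 1 • (a.2 + b.2)
      module
    · show reg Γ γ⁻¹ ∘ₗ (a.2 + b.2) ∘ₗ reg Γ γ = _
      rw [LinearMap.add_comp, LinearMap.comp_add, ha2, hb2]
      show _ = (-(starRingEnd ℂ) (matOf γ 0 1)) • (a.1 + b.1) +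
        (starRingEnd ℂ) (matOf γ 0 0) • (a.2 + b.2)
      module
  zero_mem' := by
    intro γ
    constructor
    · show reg Γ γ⁻¹ ∘ₗ (0 : _ →ₗ[ℂ] _) ∘ₗ reg Γ γ = _
      simp
    · show reg Γ γ⁻¹ ∘ₗ (0 : _ →ₗ[ℂ] _) ∘ₗ reg Γ γ = _
      simp
  smul_mem' := by
    intro c a ha γ
    obtain ⟨ha1, ha2⟩ := ha γ
    constructor
    · show reg Γ γ⁻¹ ∘ₗ (c • a.1) ∘ₗ reg Γ γ = _
      rw [LinearMap.smul_comp, LinearMap.comp_smul, ha1]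
      show _ = matOf γ 0 0 • (c • a.1) + matOf γ 0 1 • (c • a.2)
      module
    · show reg Γ γ⁻¹ ∘ₗ (c • a.2) ∘ₗ reg Γ γ = _
      rw [LinearMap.smul_comp, LinearMap.comp_smul, ha2]
      show _ = (-(starRingEnd ℂ) (matOf γ 0 1)) • (c • a.1) +
        (starRingEnd ℂ) (matOf γ 0 0) • (c • a.2)
      module

/-!
Write an endomorphism `A` of `ℂ[G]` through its kernel `K(x, y) = (A δ_y)(x)`. Conjugating by
`R(g)` replaces `K(x, y)` with `K(gx, gy)`, so a family `(A_i)` with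
`R(g)⁻¹ A_i R(g) = ∑ⱼ ρ(g)ᵢⱼ A_j` for a representation `ρ` of `G` is determined by the rows
`c_i(y) = K_i(1, y)` through `K_i(x, y) = ∑ⱼ ρ(x)ᵢⱼ c_j(x⁻¹ y)`, and conversely this formula
produces such a family for every `c`. The space of such families thus has dimension
`(dim ρ) · |G|`. For `γ ∈ SU(2)` the second row of `γ` is `(-conj v, conj u)`, so `M` is this
space for the tautological two-dimensional representation of `Γ`.
-/

namespace Matrix

theorem star_eq_adjugate_of_mem_specialUnitaryGroup {n α : Type*} [Fintype n] [DecidableEq n]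
    [CommRing α] [StarRing α] {U : Matrix n n α} (hU : U ∈ specialUnitaryGroup n α) :
    star U = U.adjugate := by
  obtain ⟨hunit, hdet⟩ := mem_specialUnitaryGroup_iff.mp hU
  refine (inv_eq_right_inv (mem_unitaryGroup_iff.mp hunit)).symm.trans (inv_eq_right_inv ?_)
  rw [mul_adjugate, hdet, one_smul]

theorem row_one_eq_of_mem_specialUnitaryGroup_fin_two {α : Type*} [CommRing α] [StarRing α]
    {U : Matrix (Fin 2) (Fin 2) α} (hU : U ∈ specialUnitaryGroup (Fin 2) α) :
    U 1 0 = -star (U 0 1) ∧ U 1 1 = star (U 0 0) := by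
  have hstar := star_eq_adjugate_of_mem_specialUnitaryGroup hU
  have h01 := congrFun (congrFun hstar 0) 1
  have h00 := congrFun (congrFun hstar 0) 0
  rw [adjugate_fin_two] at h01 h00
  simp only [star_apply, of_apply, cons_val', cons_val_zero, cons_val_one, empty_val',
    cons_val_fin_one] at h01 h00
  exact ⟨by rw [← star_neg, ← h01, star_star], h00.symm⟩

end Matrix

section RegularRepresentation

variable {G : Type*} [Group G] [DecidableEq G]

theorem reg_single (g y : G) : reg G g (Pi.single y 1) = Pi.single (g * y) 1 := by
  ext x
  simp only [reg, LinearMap.coe_mk, AddHom.coe_mk, Pi.single_apply, inv_mul_eq_iff_eq_mul]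

theorem reg_conj_single_apply (T : Module.End ℂ (G → ℂ)) (g x y : G) :
    (reg G g⁻¹ ∘ₗ T ∘ₗ reg G g) (Pi.single y 1) x = T (Pi.single (g * y) 1) (g * x) := by
  rw [LinearMap.comp_apply, LinearMap.comp_apply, reg_single]
  simp only [reg, LinearMap.coe_mk, AddHom.coe_mk, inv_inv]

end RegularRepresentation

section CovariantFamilies

variable {G ι : Type*} [Group G] [Fintype ι] [DecidableEq ι]

noncomputable def covariantFamilies (ρ : G →* Matrix ι ι ℂ) :
    Submodule ℂ (ι → Module.End ℂ (G → ℂ)) where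
  carrier := {A | ∀ g i, reg G g⁻¹ ∘ₗ A i ∘ₗ reg G g = ∑ j, ρ g i j • A j}
  add_mem' {A B} hA hB g i := by
    simp only [Pi.add_apply, LinearMap.add_comp, LinearMap.comp_add, hA g i, hB g i, smul_add,
      Finset.sum_add_distrib]
  zero_mem' g i := by simp
  smul_mem' c A hA g i := by
    simp only [Pi.smul_apply, LinearMap.smul_comp, LinearMap.comp_smul, hA g i, Finset.smul_sum,
      smul_comm c]

variable [DecidableEq G]

variable (G ι) in
def evalAtOne : (ι → Module.End ℂ (G → ℂ)) →ₗ[ℂ] (ι → G → ℂ) where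
  toFun A i y := A i (Pi.single y 1) 1
  map_add' _ _ := rfl
  map_smul' _ _ := rfl

theorem apply_single_eq_of_mem_covariantFamilies {ρ : G →* Matrix ι ι ℂ}
    {A : ι → Module.End ℂ (G → ℂ)} (hA : A ∈ covariantFamilies ρ) (i : ι) (x y : G) :
    A i (Pi.single y 1) x = ∑ j, ρ x i j * evalAtOne G ι A j (x⁻¹ * y) := by
  have h := congrArg (fun T => T (Pi.single (x⁻¹ * y) 1) 1) (hA x i)
  simp only [reg_conj_single_apply, mul_inv_cancel_left, mul_one] at h
  simp [h, evalAtOne]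

variable [Fintype G]

noncomputable def kernelFamily (ρ : G →* Matrix ι ι ℂ) (c : ι → G → ℂ) :
    ι → Module.End ℂ (G → ℂ) :=
  fun i => Matrix.toLin' (Matrix.of fun x y => ∑ j, ρ x i j * c j (x⁻¹ * y))

theorem kernelFamily_single_apply (ρ : G →* Matrix ι ι ℂ) (c : ι → G → ℂ) (i : ι) (x y : G) :
    kernelFamily ρ c i (Pi.single y 1) x = ∑ j, ρ x i j * c j (x⁻¹ * y) := by
  simp [kernelFamily]

theorem kernelFamily_mem_covariantFamilies (ρ : G →* Matrix ι ι ℂ) (c : ι → G → ℂ) :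
    kernelFamily ρ c ∈ covariantFamilies ρ := by
  intro g i
  refine (Pi.basisFun ℂ G).ext fun y => funext fun x => ?_
  have hρ : ρ (g * x) = ρ g * ρ x := map_mul ρ g x
  have hshift : (g * x)⁻¹ * (g * y) = x⁻¹ * y := by group
  simp only [Pi.basisFun_apply, reg_conj_single_apply, kernelFamily_single_apply, hρ, hshift,
    LinearMap.sum_apply, Finset.sum_apply, LinearMap.smul_apply, Pi.smul_apply, smul_eq_mul,
    Matrix.mul_apply, Finset.sum_mul, Finset.mul_sum, mul_assoc]
  exact Finset.sum_comm

theorem evalAtOne_kernelFamily (ρ : G →* Matrix ι ι ℂ) (c : ι → G → ℂ) :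
    evalAtOne G ι (kernelFamily ρ c) = c := by
  ext i y
  simp [evalAtOne, kernelFamily_single_apply, Matrix.one_apply]

theorem kernelFamily_evalAtOne_of_mem {ρ : G →* Matrix ι ι ℂ} {A : ι → Module.End ℂ (G → ℂ)}
    (hA : A ∈ covariantFamilies ρ) : kernelFamily ρ (evalAtOne G ι A) = A := by
  ext i y x
  exact (kernelFamily_single_apply ρ _ i x y).trans
    (apply_single_eq_of_mem_covariantFamilies hA i x y).symm

noncomputable def covariantFamiliesEquiv (ρ : G →* Matrix ι ι ℂ) :
    covariantFamilies ρ ≃ₗ[ℂ] (ι → G → ℂ) where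
  toLinearMap := evalAtOne G ι ∘ₗ (covariantFamilies ρ).subtype
  invFun c := ⟨kernelFamily ρ c, kernelFamily_mem_covariantFamilies ρ c⟩
  left_inv A := Subtype.ext (kernelFamily_evalAtOne_of_mem A.2)
  right_inv := evalAtOne_kernelFamily ρ

end CovariantFamilies

theorem finrank_covariantFamilies {G ι : Type*} [Group G] [Fintype ι] [DecidableEq ι] [Fintype G]
    (ρ : G →* Matrix ι ι ℂ) :
    Module.finrank ℂ (covariantFamilies ρ) = Fintype.card ι * Fintype.card G := by
  classical
  rw [(covariantFamiliesEquiv ρ).finrank_eq, Module.finrank_pi_fintype]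
  simp only [Module.finrank_fintype_fun_eq_card, Finset.sum_const, Finset.card_univ, smul_eq_mul]

noncomputable def matOfHom (Γ : Subgroup (Matrix.unitaryGroup (Fin 2) ℂ)) :
    Γ →* Matrix (Fin 2) (Fin 2) ℂ :=
  (Matrix.unitaryGroup (Fin 2) ℂ).subtype.comp Γ.subtype

theorem matOfHom_apply {Γ : Subgroup (Matrix.unitaryGroup (Fin 2) ℂ)} (γ : Γ) :
    matOfHom Γ γ = matOf γ :=
  rfl

theorem Mspace_eq_map_covariantFamilies {Γ : Subgroup (Matrix.unitaryGroup (Fin 2) ℂ)}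
    (hΓ : ∀ γ : Γ, matOf γ ∈ Matrix.specialUnitaryGroup (Fin 2) ℂ) :
    Mspace Γ = (covariantFamilies (matOfHom Γ)).map
      (LinearEquiv.finTwoArrow ℂ (Module.End ℂ (Γ → ℂ))).toLinearMap := by
  ext p
  rw [Submodule.mem_map_equiv]
  refine forall_congr' fun γ => ?_
  obtain ⟨h10, h11⟩ := Matrix.row_one_eq_of_mem_specialUnitaryGroup_fin_two (hΓ γ)
  simp only [Fin.forall_fin_two, Fin.sum_univ_two, matOfHom_apply, h10, h11, starRingEnd_apply,
    LinearEquiv.finTwoArrow_symm_apply, Matrix.cons_val_zero, Matrix.cons_val_one]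

/-- For a finite subgroup `Γ` of `SU(2)` and the left regular representation of `Γ`
on the group algebra `ℂ[Γ]`, the space `M` of pairs `(α, β)` of endomorphisms
satisfying the `Γ`-invariance relations has complex dimension `2|Γ|`
(equivalently, real dimension `4|Γ|`). -/
theorem finrank_Mspace_eq_two_mul_card
    (Γ : Subgroup (Matrix.unitaryGroup (Fin 2) ℂ)) [Fintype Γ]
    (hΓ : ∀ γ : Γ, matOf γ ∈ Matrix.specialUnitaryGroup (Fin 2) ℂ) :
    Module.finrank ℂ (Mspace Γ) = 2 * Fintype.card Γ := by
  rw [Mspace_eq_map_covariantFamilies hΓ, LinearEquiv.finrank_map_eq, finrank_covariantFamilies,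
    Fintype.card_fin]
end
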